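/- The minimum over γ1 ∈ [π/4, π/2] and x3 ∈ [-1,1] of the piecewise function g(x3, γ1, π/2 − γ1) (given by 1/2 − (1+x3)x3 cos²γ1/(−1 + 3x3 + (1+x3)cos(2γ1)) for −1 ≤ x3 < x3^(4) and (1+x3)(1 + sin 2γ1)/4 for x3^(4) ≤ x3 ≤ 1, with x3^(4) = (1 − √2 sin(2γ1 + π/4))/(3 + √2 sin(2γ1 + π/4))) equals 4/9, and it is attained uniquely at γ1 = π/4, x3 = −1/3. -/

import Mathlib

/-!
Write `s = sin 2γ₁`, `c = cos 2γ₁`, so that `s ≥ 0 ≥ c` and `s² + c² = 1` on the range of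
`γ₁`, `√2 sin (2γ₁ + π/4) = s + c`, and the switching point is `(1 - (s + c)) / (3 + (s + c))`.
Below it the denominator `D = -1 + 3x + (1 + x)c` is negative and
`G - 4/9 = ((1 + c)(3x + 1)² - 2c(1 - x)) / (-18 D)`, whose numerator is a sum of two
nonnegative terms vanishing together only for `c = 0`, `x = -1/3`. Above it `1 + x ≥ 4 / (3 + s + c)`, so
`G ≥ (1 + s) / (3 + s + c) > 4/9`, the last step being `5s - 4c ≥ 4(s - c) ≥ 4`.
-/

open Real Set

lemma sqrt_two_mul_sin_add_pi_div_four (θ : ℝ) :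
    √2 * sin (θ + π / 4) = sin θ + cos θ := by
  have h2 : √2 * √2 = 2 := mul_self_sqrt zero_le_two
  rw [sin_add, sin_pi_div_four, cos_pi_div_four]
  linear_combination (sin θ + cos θ) / 2 * h2

/-- The function `G γ₁ x` of the statement, in terms of `s = sin 2γ₁` and `c = cos 2γ₁`. -/
noncomputable def overlapSq (s c x : ℝ) : ℝ :=
  if x < (1 - (s + c)) / (3 + (s + c))
  then 1 / 2 - (1 + x) * x * (1 / 2 + c / 2) / (-1 + 3 * x + (1 + x) * c)
  else (1 + x) * (1 + s) / 4

section UnitCircle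

variable {s c : ℝ}

lemma one_le_sub_of_sq_add_sq_eq_one (hs : 0 ≤ s) (hc : c ≤ 0) (hsc : s ^ 2 + c ^ 2 = 1) :
    1 ≤ s - c := by
  nlinarith [mul_nonneg hs (neg_nonneg.2 hc)]

lemma neg_one_le_of_sq_add_sq_eq_one (hsc : s ^ 2 + c ^ 2 = 1) : -1 ≤ c := by
  nlinarith [sq_nonneg s, sq_nonneg (c + 1)]

lemma lower_branch_sub_four_ninths {x : ℝ} (hD : -1 + 3 * x + (1 + x) * c ≠ 0) :
    1 / 2 - (1 + x) * x * (1 / 2 + c / 2) / (-1 + 3 * x + (1 + x) * c) - 4 / 9 =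
      ((1 + c) * (3 * x + 1) ^ 2 + 2 * (-c) * (1 - x)) / (-18 * (-1 + 3 * x + (1 + x) * c)) := by
  set D := -1 + 3 * x + (1 + x) * c with hD_def
  field_simp
  rw [hD_def]
  ring

variable (hs : 0 ≤ s) (hc : c ≤ 0) (hsc : s ^ 2 + c ^ 2 = 1)
include hs hc hsc

lemma four_ninths_lt_upper_branch {x : ℝ} (hx : (1 - (s + c)) / (3 + (s + c)) ≤ x) :
    4 / 9 < (1 + x) * (1 + s) / 4 := by
  have hsub := one_le_sub_of_sq_add_sq_eq_one hs hc hsc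
  have hpos : 0 < 3 + (s + c) := by linarith [neg_one_le_of_sq_add_sq_eq_one hsc]
  have h1x : 4 ≤ (1 + x) * (3 + (s + c)) := by
    rw [div_le_iff₀ hpos] at hx
    linarith
  nlinarith

lemma four_ninths_le_overlapSq {x : ℝ} (hx : -1 ≤ x) :
    4 / 9 ≤ overlapSq s c x ∧ (overlapSq s c x = 4 / 9 → c = 0 ∧ x = -1 / 3) := by
  have hc1 := neg_one_le_of_sq_add_sq_eq_one hsc
  have hpos : 0 < 3 + (s + c) := by linarith
  unfold overlapSq
  split_ifs with hlt
  · rw [lt_div_iff₀ hpos] at hlt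
    have hx1 : x < 1 := by nlinarith
    -- the switching condition says `D < -s (1 + x) ≤ 0`
    have hD : -1 + 3 * x + (1 + x) * c < 0 := by
      nlinarith [mul_nonneg hs (by linarith : 0 ≤ 1 + x)]
    have hQ₁ : 0 ≤ (1 + c) * (3 * x + 1) ^ 2 := mul_nonneg (by linarith) (sq_nonneg _)
    have hQ₂ : 0 ≤ 2 * (-c) * (1 - x) := mul_nonneg (by linarith) (by linarith)
    have hdiff := lower_branch_sub_four_ninths hD.ne
    have hdiff_nonneg : 0 ≤ ((1 + c) * (3 * x + 1) ^ 2 + 2 * (-c) * (1 - x)) /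
        (-18 * (-1 + 3 * x + (1 + x) * c)) := div_nonneg (add_nonneg hQ₁ hQ₂) (by linarith)
    refine ⟨by linarith, fun heq => ?_⟩
    rw [heq, sub_self, eq_comm, div_eq_zero_iff] at hdiff
    rcases hdiff with hQ | hD_zero
    · have hc0 : c = 0 := by nlinarith
      subst hc0
      refine ⟨rfl, ?_⟩
      nlinarith
    · linarith
  · have := four_ninths_lt_upper_branch hs hc hsc (not_lt.1 hlt)
    exact ⟨this.le, fun h => absurd h this.ne'⟩

end UnitCircle

lemma eq_pi_div_four_of_cos_two_mul_eq_zero {γ : ℝ} (hγ : γ ∈ Icc (π / 4) (π / 2))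
    (h : cos (2 * γ) = 0) : γ = π / 4 := by
  have hπ := pi_pos
  have : 2 * γ = π / 2 :=
    injOn_cos ⟨by linarith [hγ.1], by linarith [hγ.2]⟩ ⟨by linarith, by linarith⟩
      (h.trans cos_pi_div_two.symm)
  linarith

theorem stmt11 :
    let G : ℝ → ℝ → ℝ := fun γ1 x =>
      if x < (1 - Real.sqrt 2 * Real.sin (2*γ1 + π/4)) / (3 + Real.sqrt 2 * Real.sin (2*γ1 + π/4))
      then 1/2 - (1 + x) * x * (Real.cos γ1)^2 / (-1 + 3*x + (1 + x) * Real.cos (2*γ1))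
      else (1 + x) * (1 + Real.sin (2*γ1)) / 4
    ((∀ γ1 ∈ Set.Icc (π/4) (π/2), ∀ x ∈ Set.Icc (-1:ℝ) 1, (4:ℝ)/9 ≤ G γ1 x) ∧
      G (π/4) (-1/3) = 4/9 ∧
      (∀ γ1 ∈ Set.Icc (π/4) (π/2), ∀ x ∈ Set.Icc (-1:ℝ) 1,
        G γ1 x = 4/9 → γ1 = π/4 ∧ x = -1/3)) := by
  intro G
  have hG : ∀ γ x, G γ x = overlapSq (sin (2 * γ)) (cos (2 * γ)) x := fun γ x => by
    simp only [G, overlapSq, sqrt_two_mul_sin_add_pi_div_four, cos_sq γ]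
  have key : ∀ γ ∈ Icc (π / 4) (π / 2), ∀ x ∈ Icc (-1 : ℝ) 1,
      4 / 9 ≤ G γ x ∧ (G γ x = 4 / 9 → γ = π / 4 ∧ x = -1 / 3) := by
    intro γ hγ x hx
    have hπ := pi_pos
    have hs : 0 ≤ sin (2 * γ) :=
      sin_nonneg_of_nonneg_of_le_pi (by linarith [hγ.1]) (by linarith [hγ.2])
    have hc : cos (2 * γ) ≤ 0 :=
      cos_nonpos_of_pi_div_two_le_of_le (by linarith [hγ.1]) (by linarith [hγ.2])
    obtain ⟨hle, heq⟩ := four_ninths_le_overlapSq hs hc (sin_sq_add_cos_sq _) hx.1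
    rw [hG]
    exact ⟨hle, fun h => (heq h).imp_left (eq_pi_div_four_of_cos_two_mul_eq_zero hγ)⟩
  refine ⟨fun γ hγ x hx => (key γ hγ x hx).1, ?_, fun γ hγ x hx => (key γ hγ x hx).2⟩
  rw [hG, show 2 * (π / 4) = π / 2 by ring, sin_pi_div_two, cos_pi_div_two]
  norm_num [overlapSq]
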